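/- For any graphs G and H with |V(H)| ≥ 3, μ_int(G ⊙ H) ≤ max{μ_int(G), ⌈|V(H)|/3⌉, Δ(H) + 1}, where Δ(H) denotes the maximum degree of H. -/

import Mathlib

/-- An (improper) interval edge coloring: for every vertex, the set of colors on
incident edges forms an interval of consecutive integers. -/
def IsIntervalColoring {V : Type*} (G : SimpleGraph V) (c : Sym2 V → ℤ) : Prop :=
  ∀ v : V, ∀ a b x : ℤ,
    (∃ u, G.Adj v u ∧ c s(v, u) = a) → (∃ u, G.Adj v u ∧ c s(v, u) = b) →
    a ≤ x → x ≤ b → ∃ u, G.Adj v u ∧ c s(v, u) = x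

/-- A coloring is `k`-improper if at every vertex each color appears on at most
`k` incident edges. -/
def IsKImproper {V : Type*} (G : SimpleGraph V) (c : Sym2 V → ℤ) (k : ℕ) : Prop :=
  ∀ v : V, ∀ q : ℤ, ({u : V | G.Adj v u ∧ c s(v, u) = q}).ncard ≤ k

/-- The interval coloring impropriety `μ_int(G)`: the least `k` such that `G`
admits a `k`-improper interval edge coloring. -/
noncomputable def impropriety {V : Type*} (G : SimpleGraph V) : ℕ :=
  sInf {k : ℕ | ∃ c : Sym2 V → ℤ, IsIntervalColoring G c ∧ IsKImproper G c k}

/-- The maximum degree of a graph. -/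
noncomputable def maxDeg {V : Type*} (G : SimpleGraph V) : ℕ :=
  sSup {d : ℕ | ∃ v : V, (G.neighborSet v).ncard = d}

/-- The corona product `G ⊙ H`: take `G` and one copy of `H` for every vertex
of `G`, joining each vertex `v` of `G` to all vertices of its copy of `H`. -/
def corona {V W : Type*} (G : SimpleGraph V) (H : SimpleGraph W) :
    SimpleGraph (V ⊕ V × W) where
  Adj x y :=
    match x, y with
    | Sum.inl u, Sum.inl v => G.Adj u v
    | Sum.inl u, Sum.inr p => u = p.1
    | Sum.inr p, Sum.inl u => u = p.1
    | Sum.inr p, Sum.inr q => p.1 = q.1 ∧ H.Adj p.2 q.2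
  symm := by
    constructor
    rintro (u | p) (v | q) h
    · exact h.symm
    · exact h
    · exact h
    · exact ⟨h.1.symm, h.2.symm⟩
  loopless := by
    constructor
    rintro (u | p) h
    · exact G.irrefl h
    · exact H.irrefl h.2

/-! Take an optimal coloring of `G` and let `top v` be the largest color at `v`. The edges from
`v` to its copy of `H` get the colors `top v + 1`, `top v + 2`, `top v + 3`, each on at most
`⌈|V(H)|/3⌉` of them (distribute by the residue mod 3 of an enumeration of `V(H)`), and every
edge inside that copy gets `top v + 2`. At `v` the colors then continue the interval of `G`;
at a vertex of the copy only `top v + 2` and one color adjacent to it occur, and each color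
occurs at most `Δ(H) + 1` times. -/

section Impropriety

variable {V : Type*} {G : SimpleGraph V}

theorem IsKImproper.mono {c : Sym2 V → ℤ} {k l : ℕ} (h : IsKImproper G c k) (hkl : k ≤ l) :
    IsKImproper G c l :=
  fun v q => (h v q).trans hkl

theorem impropriety_le {c : Sym2 V → ℤ} {k : ℕ} (hint : IsIntervalColoring G c)
    (himp : IsKImproper G c k) : impropriety G ≤ k :=
  Nat.sInf_le ⟨c, hint, himp⟩

theorem isIntervalColoring_const (z : ℤ) : IsIntervalColoring G fun _ => z := by
  rintro v a b x ⟨u, hu, rfl⟩ ⟨_, _, rfl⟩ hax hxb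
  exact ⟨u, hu, le_antisymm hax hxb⟩

theorem isKImproper_card [Fintype V] (c : Sym2 V → ℤ) : IsKImproper G c (Fintype.card V) :=
  fun _ _ => (Set.ncard_le_card _).trans_eq Nat.card_eq_fintype_card

theorem exists_isIntervalColoring_isKImproper_impropriety [Fintype V] (G : SimpleGraph V) :
    ∃ c, IsIntervalColoring G c ∧ IsKImproper G c (impropriety G) :=
  Nat.sInf_mem (s := {k | ∃ c, IsIntervalColoring G c ∧ IsKImproper G c k})
    ⟨_, _, isIntervalColoring_const 0, isKImproper_card _⟩

theorem ncard_neighborSet_le_maxDeg [Finite V] (v : V) : (G.neighborSet v).ncard ≤ maxDeg G :=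
  le_csSup ⟨Nat.card V, by rintro _ ⟨u, rfl⟩; exact Set.ncard_le_card _⟩ ⟨v, rfl⟩

/-- At an isolated vertex this is the junk value `sSup ∅ = 0`. -/
noncomputable def topColor (G : SimpleGraph V) (c : Sym2 V → ℤ) (v : V) : ℤ :=
  sSup ((fun u => c s(v, u)) '' G.neighborSet v)

variable [Finite V] {c : Sym2 V → ℤ} {u v : V}

theorem le_topColor (h : G.Adj v u) : c s(v, u) ≤ topColor G c v :=
  le_csSup ((Set.toFinite (G.neighborSet v)).image _).bddAbove ⟨u, h, rfl⟩

theorem exists_adj_color_eq_topColor (h : G.Adj v u) :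
    ∃ u', G.Adj v u' ∧ c s(v, u') = topColor G c v :=
  (Set.Nonempty.image _ ⟨u, h⟩).csSup_mem ((Set.toFinite (G.neighborSet v)).image _)

end Impropriety

section ResidueLabel

variable {W : Type*} {n : ℕ} (e : W ≃ Fin n)

theorem ncard_mod_eq_le {k : ℕ} (hk : 0 < k) (r : ℕ) :
    {w | (e w : ℕ) % k = r}.ncard ≤ (n + k - 1) / k := by
  calc {w | (e w : ℕ) % k = r}.ncard ≤ (Set.Iio ((n + k - 1) / k)).ncard := by
        refine Set.ncard_le_ncard_of_injOn (fun w => (e w : ℕ) / k) ?_ ?_ (Set.finite_Iio _)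
        · intro w _
          have := (e w).isLt
          calc (e w : ℕ) / k < (e w + k : ℕ) / k := by rw [Nat.add_div_right _ hk]; omega
            _ ≤ (n + k - 1) / k := Nat.div_le_div_right (by omega)
        · intro w₁ h₁ w₂ h₂ hdiv
          exact e.injective <| Fin.ext <| by
            rw [← Nat.div_add_mod (e w₁ : ℕ) k, ← Nat.div_add_mod (e w₂ : ℕ) k]
            simp_all
    _ = (n + k - 1) / k := by rw [← Finset.coe_Iio, Set.ncard_coe_finset, Nat.card_Iio]

def residueLabel (w : W) : ℤ := ((e w : ℕ) % 3 : ℕ) + 1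

theorem residueLabel_mem_Icc (w : W) : residueLabel e w ∈ Set.Icc 1 3 := by
  have := Nat.mod_lt (e w : ℕ) (by norm_num : 0 < 3)
  simp only [residueLabel, Set.mem_Icc]
  omega

theorem exists_residueLabel_eq {m : ℤ} {w : W} (h1 : 1 ≤ m) (hm : m ≤ residueLabel e w) :
    ∃ w', residueLabel e w' = m := by
  have hlt : (m - 1).toNat < n := by
    have := Nat.mod_le (e w : ℕ) 3
    have := (e w).isLt
    simp only [residueLabel] at hm
    omega
  refine ⟨e.symm ⟨(m - 1).toNat, hlt⟩, ?_⟩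
  have : (m - 1).toNat < 3 := by
    have := Nat.mod_lt (e w : ℕ) (by norm_num : 0 < 3)
    simp only [residueLabel] at hm
    omega
  simp only [residueLabel, Equiv.apply_symm_apply, Nat.mod_eq_of_lt this]
  omega

theorem ncard_residueLabel_eq_le (m : ℤ) :
    {w | residueLabel e w = m}.ncard ≤ (n + 2) / 3 := by
  have : Finite W := Finite.of_equiv _ e.symm
  refine (Set.ncard_le_ncard (fun w (hw : residueLabel e w = m) => ?_)).trans
    (ncard_mod_eq_le e (by norm_num : 0 < 3) (m - 1).toNat)
  simp only [residueLabel] at hw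
  change _ = _
  omega

end ResidueLabel

section CoronaColoring

variable {V W : Type*} {G : SimpleGraph V} {H : SimpleGraph W}

theorem inr_pair_injective (v : V) :
    Function.Injective fun w : W => (Sum.inr (v, w) : V ⊕ V × W) :=
  fun _ _ h => by simpa using h

variable (cG : Sym2 V → ℤ) (top : V → ℤ) (label : W → ℤ)

/-- On non-edges the values are irrelevant; the `max` only makes the function symmetric. -/
def coronaColorFun : V ⊕ V × W → V ⊕ V × W → ℤ
  | .inl u, .inl v => cG s(u, v)
  | .inl _, .inr p => top p.1 + label p.2
  | .inr p, .inl _ => top p.1 + label p.2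
  | .inr p, .inr q => max (top p.1) (top q.1) + 2

theorem coronaColorFun_comm (x y : V ⊕ V × W) :
    coronaColorFun cG top label x y = coronaColorFun cG top label y x := by
  rcases x with u | p <;> rcases y with v | q <;>
    simp only [coronaColorFun, Sym2.eq_swap, max_comm]

def coronaColor : Sym2 (V ⊕ V × W) → ℤ :=
  Sym2.lift ⟨coronaColorFun cG top label, coronaColorFun_comm cG top label⟩

@[simp] theorem coronaColor_inl_inl (u v : V) :
    coronaColor cG top label s(.inl u, .inl v) = cG s(u, v) :=
  rfl

@[simp] theorem coronaColor_inl_inr (u : V) (p : V × W) :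
    coronaColor cG top label s(.inl u, .inr p) = top p.1 + label p.2 :=
  rfl

@[simp] theorem coronaColor_inr_inr (p q : V × W) :
    coronaColor cG top label s(.inr p, .inr q) = max (top p.1) (top q.1) + 2 :=
  rfl

theorem exists_coronaColor_inl_iff (v : V) (z : ℤ) :
    (∃ y, (corona G H).Adj (.inl v) y ∧ coronaColor cG top label s(.inl v, y) = z) ↔
      (∃ u, G.Adj v u ∧ cG s(v, u) = z) ∨ ∃ w, top v + label w = z := by
  constructor
  · rintro ⟨u | ⟨v', w⟩, hadj, rfl⟩
    · exact .inl ⟨u, hadj, rfl⟩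
    · obtain rfl : v = v' := hadj
      exact .inr ⟨w, rfl⟩
  · rintro (⟨u, hadj, rfl⟩ | ⟨w, rfl⟩)
    · exact ⟨.inl u, hadj, rfl⟩
    · exact ⟨.inr (v, w), rfl, rfl⟩

theorem coronaColor_inr_eq {v : V} {w : W} {y : V ⊕ V × W}
    (hadj : (corona G H).Adj (.inr (v, w)) y) :
    coronaColor cG top label s(.inr (v, w), y) = top v + label w ∨
      coronaColor cG top label s(.inr (v, w), y) = top v + 2 := by
  rcases y with u | ⟨v', w'⟩
  · exact .inl rfl
  · obtain ⟨rfl, -⟩ := hadj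
    exact .inr (by simp)

variable {cG label} [Finite V]

theorem IsIntervalColoring.corona (hG : IsIntervalColoring G cG)
    (hlabel : ∀ w, label w ∈ Set.Icc 1 3)
    (hdown : ∀ m w, 1 ≤ m → m ≤ label w → ∃ w', label w' = m) :
    IsIntervalColoring (corona G H) (coronaColor cG (topColor G cG) label) := by
  set top := topColor G cG
  rintro (v | ⟨v, w⟩) a b x ha hb hax hxb
  · rw [exists_coronaColor_inl_iff] at ha hb ⊢
    by_cases hx : x ≤ top v
    · refine .inl ?_
      obtain ⟨u, hu, hua⟩ | ⟨w, rfl⟩ := ha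
      · obtain ⟨u', hu', hu'top⟩ := exists_adj_color_eq_topColor (c := cG) hu
        exact hG v a (top v) x ⟨u, hu, hua⟩ ⟨u', hu', hu'top⟩ hax hx
      · linarith [(hlabel w).1]
    · refine .inr ?_
      obtain ⟨u, hu, rfl⟩ | ⟨w, rfl⟩ := hb
      · linarith [le_topColor (c := cG) hu]
      · exact hdown (x - top v) w (by linarith) (by linarith) |>.imp fun _ h => by linarith
  · obtain ⟨ya, hya, rfl⟩ := ha
    obtain ⟨yb, hyb, rfl⟩ := hb
    obtain ⟨hw1, hw3⟩ := hlabel w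
    have : x = coronaColor cG top label s(.inr (v, w), ya) ∨
        x = coronaColor cG top label s(.inr (v, w), yb) := by
      rcases coronaColor_inr_eq cG top label hya with ha | ha <;>
        rcases coronaColor_inr_eq cG top label hyb with hb | hb <;> omega
    rcases this with rfl | rfl
    exacts [⟨ya, hya, rfl⟩, ⟨yb, hyb, rfl⟩]

theorem IsKImproper.corona [Finite W] {k : ℕ} (hG : IsKImproper G cG k)
    (hlabel : ∀ w, 1 ≤ label w) (hfiber : ∀ m, {w | label w = m}.ncard ≤ k)
    (hdeg : maxDeg H + 1 ≤ k) :
    IsKImproper (corona G H) (coronaColor cG (topColor G cG) label) k := by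
  set top := topColor G cG
  rintro (v | ⟨v, w⟩) q
  · by_cases hq : q ≤ top v
    · calc _ ≤ (Sum.inl '' {u | G.Adj v u ∧ cG s(v, u) = q}).ncard := by
            refine Set.ncard_le_ncard ?_
            rintro (u | ⟨v', w⟩) ⟨hadj, hcol⟩
            · exact ⟨u, ⟨hadj, hcol⟩, rfl⟩
            · obtain rfl : v = v' := hadj
              simp only [coronaColor_inl_inr] at hcol
              linarith [hlabel w]
        _ = _ := Set.ncard_image_of_injective _ Sum.inl_injective
        _ ≤ k := hG v q
    · calc _ ≤ ((fun w => Sum.inr (v, w)) '' {w | label w = q - top v}).ncard := by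
            refine Set.ncard_le_ncard ?_
            rintro (u | ⟨v', w⟩) ⟨hadj, hcol⟩
            · simp only [coronaColor_inl_inl] at hcol
              linarith [le_topColor (c := cG) hadj]
            · obtain rfl : v = v' := hadj
              simp only [coronaColor_inl_inr] at hcol
              exact ⟨w, by change _ = _; linarith, rfl⟩
        _ = _ := Set.ncard_image_of_injective _ (inr_pair_injective v)
        _ ≤ k := hfiber _
  · calc _ ≤ (insert (Sum.inl v) ((fun w' => Sum.inr (v, w')) '' H.neighborSet w)).ncard := by
          refine Set.ncard_le_ncard ?_
          rintro (u | ⟨v', w'⟩) ⟨hadj, -⟩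
          · obtain rfl : u = v := hadj
            exact Set.mem_insert _ _
          · obtain ⟨rfl, hadj⟩ := hadj
            exact Set.mem_insert_of_mem _ ⟨w', hadj, rfl⟩
      _ ≤ ((fun w' => Sum.inr (v, w')) '' H.neighborSet w).ncard + 1 := Set.ncard_insert_le _ _
      _ = (H.neighborSet w).ncard + 1 := by
          rw [Set.ncard_image_of_injective _ (inr_pair_injective v)]
      _ ≤ k := by linarith [ncard_neighborSet_le_maxDeg (G := H) w]

end CoronaColoring

theorem stmt18_general {V W : Type*} [Fintype V] [Fintype W]
    (G : SimpleGraph V) (H : SimpleGraph W) :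
    impropriety (corona G H) ≤
      max (impropriety G) (max ((Fintype.card W + 2) / 3) (maxDeg H + 1)) := by
  obtain ⟨cG, hint, himp⟩ := exists_isIntervalColoring_isKImproper_impropriety G
  set e := Fintype.equivFin W
  apply impropriety_le (c := coronaColor cG (topColor G cG) (residueLabel e))
  · exact hint.corona (residueLabel_mem_Icc e) fun _ _ => exists_residueLabel_eq e
  · refine (himp.mono (le_max_left _ _)).corona (fun w => (residueLabel_mem_Icc e w).1)
      (fun m => ?_) (le_max_of_le_right (le_max_right _ _))
    exact (ncard_residueLabel_eq_le e m).trans (le_max_of_le_right (le_max_left _ _))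

/-- For any graphs `G` and `H` with `|V(H)| ≥ 3`,
`μ_int(G ⊙ H) ≤ max {μ_int(G), ⌈|V(H)|/3⌉, Δ(H) + 1}`. -/
theorem stmt18 {V W : Type*} [Fintype V] [Fintype W]
    (G : SimpleGraph V) (H : SimpleGraph W) (hW : 3 ≤ Fintype.card W) :
    impropriety (corona G H) ≤
      max (impropriety G) (max ((Fintype.card W + 2) / 3) (maxDeg H + 1)) :=
  stmt18_general G H
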